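/- arXiv:math/0604497 — 8 statements merged into one kernel-verified Lean document; each statement's English description precedes it below -/
import Mathlib

section
/- Let D ⊆ ℂ^k be a separating set contained in the closed unit polydisk. Then the intersection 𝓑(D) of all closed unit balls of Banach algebra norms on ℂ^k that contain D is itself the closed unit ball of a Banach algebra norm on ℂ^k, and 𝓑(D) ⊆ B₁ for every closed unit ball B₁ of a Banach algebra norm on ℂ^k with D ⊆ B₁. -/
/-- `N` is a Banach algebra norm on `ℂ^k` (coordinatewise operations, unit `1 = (1,...,1)`). -/
def IsBanachAlgebraNorm (k : ℕ) (N : (Fin k → ℂ) → ℝ) : Prop :=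
  (∀ v, N v = 0 ↔ v = 0) ∧
  (∀ (c : ℂ) (v), N (c • v) = ‖c‖ * N v) ∧
  (∀ v w, N (v + w) ≤ N v + N w) ∧
  (∀ v w, N (v * w) ≤ N v * N w) ∧
  N 1 = 1

/-- `B` is the closed unit ball of some Banach algebra norm on `ℂ^k`. -/
def IsBanachAlgebraBall (k : ℕ) (B : Set (Fin k → ℂ)) : Prop :=
  ∃ N : (Fin k → ℂ) → ℝ, IsBanachAlgebraNorm k N ∧ B = {v | N v ≤ 1}

/-- `D ⊆ ℂ^k` is separating: for each pair of distinct indices some `w ∈ D`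
has distinct corresponding coordinates. -/
def Separating (k : ℕ) (D : Set (Fin k → ℂ)) : Prop :=
  ∀ i j : Fin k, i ≠ j → ∃ w ∈ D, w i ≠ w j

lemma ban_nonneg {k : ℕ} {N : (Fin k → ℂ) → ℝ} (hN : IsBanachAlgebraNorm k N)
    (v : Fin k → ℂ) : 0 ≤ N v := by
  obtain ⟨h0, hs, ha, _, _⟩ := hN
  have h1 : N ((-1 : ℂ) • v) = N v := by rw [hs]; simp
  have h2 : v + (-1 : ℂ) • v = 0 := by
    funext l; simp
  have h3 := ha v ((-1 : ℂ) • v)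
  rw [h2, h1, (h0 0).mpr rfl] at h3
  linarith

lemma ban_sum {k : ℕ} {N : (Fin k → ℂ) → ℝ} (hN : IsBanachAlgebraNorm k N)
    {ι : Type*} (s : Finset ι) (f : ι → Fin k → ℂ) :
    N (∑ i ∈ s, f i) ≤ ∑ i ∈ s, N (f i) := by
  classical
  induction s using Finset.induction with
  | empty => simp [(hN.1 0).mpr rfl]
  | insert _ _ h ih =>
    rw [Finset.sum_insert h, Finset.sum_insert h]
    exact (hN.2.2.1 _ _).trans (add_le_add_right ih _)

lemma ban_prod {k : ℕ} {N : (Fin k → ℂ) → ℝ} (hN : IsBanachAlgebraNorm k N)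
    {ι : Type*} (s : Finset ι) (f : ι → Fin k → ℂ) :
    N (∏ i ∈ s, f i) ≤ ∏ i ∈ s, N (f i) := by
  classical
  induction s using Finset.induction with
  | empty => simp [hN.2.2.2.2]
  | insert _ _ h ih =>
    rw [Finset.prod_insert h, Finset.prod_insert h]
    exact (hN.2.2.2.1 _ _).trans (mul_le_mul_of_nonneg_left ih (ban_nonneg hN _))

/-- If `D ⊆ ℂ^k` is a separating subset of the closed unit polydisk, then the
intersection `𝓑(D)` of all closed unit balls of Banach algebra norms on `ℂ^k`
containing `D` is itself such a ball, and it is contained in every such ball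
containing `D`. -/
theorem stmt2 (k : ℕ) (hk : 0 < k) (D : Set (Fin k → ℂ))
    (hD : ∀ v ∈ D, ∀ i : Fin k, ‖v i‖ ≤ 1) (hsep : Separating k D) :
    IsBanachAlgebraBall k (⋂₀ {B | IsBanachAlgebraBall k B ∧ D ⊆ B}) ∧
    ∀ B₁ : Set (Fin k → ℂ), IsBanachAlgebraBall k B₁ → D ⊆ B₁ →
      (⋂₀ {B | IsBanachAlgebraBall k B ∧ D ⊆ B}) ⊆ B₁ := by
  classical
  haveI : Nonempty (Fin k) := ⟨⟨0, hk⟩⟩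
  refine ⟨?_, fun B₁ h1 h2 => Set.sInter_subset_of_mem ⟨h1, h2⟩⟩
  set 𝒩 := {N : (Fin k → ℂ) → ℝ | IsBanachAlgebraNorm k N ∧ ∀ w ∈ D, N w ≤ 1} with h𝒩
  -- the sup norm belongs to the family
  have hinf : (fun v : Fin k → ℂ => ‖v‖) ∈ 𝒩 := by
    refine ⟨⟨fun v => norm_eq_zero, fun c v => norm_smul c v, fun v w => norm_add_le v w,
      fun v w => norm_mul_le v w, norm_one⟩, fun w hw => ?_⟩
    exact (pi_norm_le_iff_of_nonneg zero_le_one).mpr (hD w hw)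
  -- choose separating vectors
  have hWex : ∀ i j : Fin k, ∃ w, i ≠ j → w ∈ D ∧ w i ≠ w j := by
    intro i j
    by_cases h : i = j
    · exact ⟨0, fun h' => absurd h h'⟩
    · obtain ⟨w, hw1, hw2⟩ := hsep i j h
      exact ⟨w, fun _ => ⟨hw1, hw2⟩⟩
  choose W hW using hWex
  set C : Fin k → ℝ := fun i => ∏ j ∈ Finset.univ.erase i, 2 / ‖W i j i - W i j j‖ with hC
  -- the key uniform bound
  have key : ∀ N ∈ 𝒩, ∀ v : Fin k → ℂ, N v ≤ ∑ i, ‖v i‖ * C i := by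
    rintro N ⟨hN, hNball⟩ v
    set E : Fin k → (Fin k → ℂ) := fun i l => if l = i then 1 else 0 with hE
    set U : Fin k → Fin k → (Fin k → ℂ) :=
      fun i j => (W i j i - W i j j)⁻¹ • (W i j - (W i j j) • (1 : Fin k → ℂ)) with hU
    have hEU : ∀ i : Fin k, E i = ∏ j ∈ Finset.univ.erase i, U i j := by
      intro i
      funext l
      rw [Finset.prod_apply]
      by_cases hl : l = i
      · subst hl
        rw [hE]
        simp only [if_pos rfl]
        refine (Finset.prod_eq_one ?_).symm
        intro j hj
        have hij : l ≠ j := fun h => (Finset.mem_erase.mp hj).1 h.symm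
        have hd : W l j l - W l j j ≠ 0 := sub_ne_zero.mpr (hW l j hij).2
        simp [hU, hd, inv_mul_cancel₀ hd]
      · have hlmem : l ∈ Finset.univ.erase i := Finset.mem_erase.mpr ⟨hl, Finset.mem_univ l⟩
        rw [hE]
        simp only [if_neg hl]
        refine (Finset.prod_eq_zero hlmem ?_).symm
        simp [hU]
    have hUbound : ∀ i j : Fin k, i ≠ j → N (U i j) ≤ 2 / ‖W i j i - W i j j‖ := by
      intro i j hij
      obtain ⟨hmem, hne⟩ := hW i j hij
      have hd : W i j i - W i j j ≠ 0 := sub_ne_zero.mpr hne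
      have h1 : N (U i j) = ‖(W i j i - W i j j)⁻¹‖ * N (W i j - (W i j j) • 1) := hN.2.1 _ _
      have h2 : W i j - (W i j j) • (1 : Fin k → ℂ) = W i j + (-(W i j j)) • 1 := by
        funext l; simp; ring
      have h3 : N (W i j - (W i j j) • 1) ≤ 2 := by
        rw [h2]
        calc N (W i j + (-(W i j j)) • 1) ≤ N (W i j) + N ((-(W i j j)) • 1) := hN.2.2.1 _ _
          _ = N (W i j) + ‖-(W i j j)‖ * N 1 := by rw [hN.2.1]
          _ ≤ 1 + 1 * 1 := by
              have := hNball _ hmem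
              have := hD _ hmem j
              rw [hN.2.2.2.2, norm_neg]
              gcongr
          _ = 2 := by norm_num
      rw [h1, norm_inv, div_eq_mul_inv, mul_comm 2]
      exact mul_le_mul_of_nonneg_left h3 (inv_nonneg.mpr (norm_nonneg _))
    have hEbound : ∀ i : Fin k, N (E i) ≤ C i := by
      intro i
      rw [hEU i, hC]
      refine (ban_prod hN _ _).trans (Finset.prod_le_prod ?_ ?_)
      · intro j hj; exact ban_nonneg hN _
      · intro j hj
        exact hUbound i j (fun h => (Finset.mem_erase.mp hj).1 h.symm)
    have hv : v = ∑ i, v i • E i := by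
      funext l
      rw [Finset.sum_apply]
      simp [hE, Finset.sum_ite_eq]
    calc N v = N (∑ i, v i • E i) := by rw [← hv]
      _ ≤ ∑ i, N (v i • E i) := ban_sum hN _ _
      _ = ∑ i, ‖v i‖ * N (E i) := by simp_rw [hN.2.1]
      _ ≤ ∑ i, ‖v i‖ * C i := by
          refine Finset.sum_le_sum fun i _ => ?_
          exact mul_le_mul_of_nonneg_left (hEbound i) (norm_nonneg _)
  -- the sup norm over the family
  set Nsup : (Fin k → ℂ) → ℝ := fun v => sSup ((fun N => N v) '' 𝒩) with hNsup
  have hne : ∀ v, ((fun N => N v) '' 𝒩).Nonempty := fun v => ⟨_, ⟨_, hinf, rfl⟩⟩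
  have hbdd : ∀ v, BddAbove ((fun N => N v) '' 𝒩) := by
    intro v
    refine ⟨∑ i, ‖v i‖ * C i, ?_⟩
    rintro x ⟨N, hN, rfl⟩
    exact key N hN v
  have le_sup : ∀ N ∈ 𝒩, ∀ v, N v ≤ Nsup v := by
    intro N hN v
    exact le_csSup (hbdd v) ⟨N, hN, rfl⟩
  have sup_le : ∀ v (a : ℝ), (∀ N ∈ 𝒩, N v ≤ a) → Nsup v ≤ a := by
    intro v a h
    refine csSup_le (hne v) ?_
    rintro x ⟨N, hN, rfl⟩
    exact h N hN
  have sup_nonneg : ∀ v, 0 ≤ Nsup v := fun v =>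
    (norm_nonneg v).trans (le_sup _ hinf v)
  have hzero : ∀ v, Nsup v = 0 ↔ v = 0 := by
    intro v
    constructor
    · intro h
      have : ‖v‖ ≤ 0 := by
        have := le_sup _ hinf v
        simpa [h] using this
      exact norm_le_zero_iff.mp this
    · rintro rfl
      refine le_antisymm (sup_le 0 0 ?_) (sup_nonneg 0)
      rintro N ⟨hN, -⟩
      exact le_of_eq ((hN.1 0).mpr rfl)
  have hsmul_le : ∀ (c : ℂ) v, Nsup (c • v) ≤ ‖c‖ * Nsup v := by
    intro c v
    refine sup_le _ _ ?_
    rintro N hN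
    rw [hN.1.2.1]
    exact mul_le_mul_of_nonneg_left (le_sup N hN v) (norm_nonneg c)
  have hsmul : ∀ (c : ℂ) v, Nsup (c • v) = ‖c‖ * Nsup v := by
    intro c v
    rcases eq_or_ne c 0 with rfl | hc
    · simp [(hzero 0).mpr rfl, (hzero _).mpr (zero_smul ℂ v)]
    · refine le_antisymm (hsmul_le c v) ?_
      have := hsmul_le c⁻¹ (c • v)
      rw [smul_smul, inv_mul_cancel₀ hc, one_smul, norm_inv] at this
      rw [← mul_le_mul_iff_right₀ (a := ‖c‖) (norm_pos_iff.mpr hc)] at this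
      rw [← mul_assoc, mul_inv_cancel₀ (norm_ne_zero_iff.mpr hc), one_mul] at this
      linarith
  have hadd : ∀ v w, Nsup (v + w) ≤ Nsup v + Nsup w := by
    intro v w
    refine sup_le _ _ fun N hN => ?_
    exact (hN.1.2.2.1 v w).trans (add_le_add (le_sup N hN v) (le_sup N hN w))
  have hmul : ∀ v w, Nsup (v * w) ≤ Nsup v * Nsup w := by
    intro v w
    refine sup_le _ _ fun N hN => ?_
    refine (hN.1.2.2.2.1 v w).trans ?_
    exact mul_le_mul (le_sup N hN v) (le_sup N hN w) (ban_nonneg hN.1 w) (sup_nonneg v)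
  have hone : Nsup 1 = 1 := by
    refine le_antisymm (sup_le _ _ ?_) ?_
    · rintro N ⟨hN, -⟩
      exact le_of_eq hN.2.2.2.2
    · have := le_sup _ hinf 1
      rwa [norm_one] at this
  refine ⟨Nsup, ⟨hzero, hsmul, hadd, hmul, hone⟩, ?_⟩
  ext v
  simp only [Set.mem_sInter, Set.mem_setOf_eq]
  constructor
  · intro h
    refine sup_le v 1 ?_
    rintro N ⟨hN, hNball⟩
    exact h {u | N u ≤ 1} ⟨⟨N, hN, rfl⟩, fun w hw => hNball w hw⟩
  · rintro h B ⟨⟨N, hN, rfl⟩, hDB⟩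
    exact (le_sup N ⟨hN, fun w hw => hDB hw⟩ v).trans h
end

section
/- Let k ≥ 2, let ‖·‖ be a Banach algebra norm on ℂ^k satisfying von Neumann's inequality with closed unit ball V, and set B := V̂ = {(v₂,...,v_k) ∈ ℂ^{k-1} : (0,v₂,...,v_k) ∈ V} ⊆ ℂ^{k-1}. Then: (1) B is a closed subset of the closed unit polydisk of ℂ^{k-1}; (2) B is convex, balanced, and absorbing; (3) B·B ⊆ B; and (4) for every complex polynomial p in one variable with p(0) = 0 and sup{|p(z)| : |z| ≤ 1} ≤ 1 and every v ∈ B, the vector (p(v₂),...,p(v_k)) belongs to B. -/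
/-- `sup {|p(z)| : |z| ≤ 1}` for a one-variable complex polynomial `p`. -/
noncomputable def supDisk (p : Polynomial ℂ) : ℝ :=
  sSup {t : ℝ | ∃ z : ℂ, ‖z‖ ≤ 1 ∧ t = ‖Polynomial.eval z p‖}

/-- The norm `N` on `ℂ^k` satisfies von Neumann's inequality. -/
def SatisfiesVonNeumann (k : ℕ) (N : (Fin k → ℂ) → ℝ) : Prop :=
  ∀ v : Fin k → ℂ, N v ≤ 1 → ∀ p : Polynomial ℂ,
    N (fun i => Polynomial.eval (v i) p) ≤ supDisk p

/-- Non-dependent prepend-zero map. -/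
def consZ {k : ℕ} (u : Fin k → ℂ) : Fin (k + 1) → ℂ := Fin.cons 0 u

@[simp] lemma consZ_zero {k : ℕ} (u : Fin k → ℂ) : consZ u 0 = 0 := rfl
@[simp] lemma consZ_succ {k : ℕ} (u : Fin k → ℂ) (j : Fin k) : consZ u j.succ = u j := rfl

section aux

variable {k : ℕ} {N : (Fin k → ℂ) → ℝ}

lemma bna_nonneg (hN : IsBanachAlgebraNorm k N) (v : Fin k → ℂ) : 0 ≤ N v := by
  obtain ⟨h0, hsmul, hadd, _, _⟩ := hN
  have h1 : N ((-1 : ℂ) • v) = N v := by rw [hsmul]; simp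
  have h2 : N (v + (-1 : ℂ) • v) ≤ N v + N ((-1 : ℂ) • v) := hadd _ _
  have h3 : v + (-1 : ℂ) • v = 0 := by simp
  rw [h3, (h0 0).mpr rfl, h1] at h2
  linarith

lemma bna_coord (hN : IsBanachAlgebraNorm k N) (v : Fin k → ℂ) (i : Fin k) :
    ‖v i‖ ≤ N v := by
  obtain ⟨h0, hsmul, hadd, hmul, _⟩ := hN
  set e : Fin k → ℂ := Pi.single i 1 with he
  have hene : e ≠ 0 := by
    intro h
    have := congrFun h i
    simp [he] at this
  have hepos : 0 < N e := by
    rcases lt_or_eq_of_le (bna_nonneg ⟨h0, hsmul, hadd, hmul, ‹_›⟩ e) with h | h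
    · exact h
    · exact absurd ((h0 e).mp h.symm) hene
  have hve : v * e = v i • e := by
    funext j
    by_cases hj : j = i
    · subst hj; simp [he]
    · simp [he, Pi.single_apply, hj]
  have := hmul v e
  rw [hve, hsmul] at this
  exact le_of_mul_le_mul_right this hepos

lemma bna_sum_le (hN : IsBanachAlgebraNorm k N) {ι : Type*} (s : Finset ι)
    (f : ι → Fin k → ℂ) : N (∑ j ∈ s, f j) ≤ ∑ j ∈ s, N (f j) := by
  classical
  induction s using Finset.induction with
  | empty => simp [(hN.1 0).mpr rfl]
  | insert _ _ hx ih =>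
    rw [Finset.sum_insert hx, Finset.sum_insert hx]
    exact le_trans (hN.2.2.1 _ _) (by linarith)

lemma bna_le (hN : IsBanachAlgebraNorm k N) (v : Fin k → ℂ) :
    N v ≤ ∑ j : Fin k, ‖v j‖ * N (Pi.single j 1) := by
  have hv : v = ∑ j : Fin k, (v j) • (Pi.single j 1 : Fin k → ℂ) := by
    funext i
    simp [Pi.single_apply, Finset.sum_pi_single']
  calc N v = N (∑ j : Fin k, (v j) • (Pi.single j 1 : Fin k → ℂ)) := by rw [← hv]
    _ ≤ ∑ j : Fin k, N ((v j) • (Pi.single j 1 : Fin k → ℂ)) := bna_sum_le hN _ _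
    _ = ∑ j : Fin k, ‖v j‖ * N (Pi.single j 1) := by simp [hN.2.1]

lemma bna_continuous (hN : IsBanachAlgebraNorm k N) : Continuous N := by
  obtain ⟨h0, hsmul, hadd, hmul, hone⟩ := hN
  have habs : ∀ v w : Fin k → ℂ, |N v - N w| ≤ N (v - w) := by
    intro v w
    have h1 : N v ≤ N (v - w) + N w := by
      have := hadd (v - w) w; simpa using this
    have h2 : N w ≤ N (v - w) + N v := by
      have hneg : N (w - v) = N (v - w) := by
        have : w - v = (-1 : ℂ) • (v - w) := by ring_nf; module
        rw [this, hsmul]; simp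
      have := hadd (w - v) v; rw [hneg] at this; simpa using this
    rw [abs_sub_le_iff]; constructor <;> linarith
  set C : ℝ := ∑ j : Fin k, N (Pi.single j 1) with hC
  have hCnn : 0 ≤ C := Finset.sum_nonneg fun j _ => bna_nonneg ⟨h0, hsmul, hadd, hmul, hone⟩ _
  rw [Metric.continuous_iff]
  intro b ε hε
  refine ⟨ε / (C + 1), by positivity, fun a hab => ?_⟩
  have hle : N (a - b) ≤ C * dist a b := by
    calc N (a - b) ≤ ∑ j : Fin k, ‖(a - b) j‖ * N (Pi.single j 1) :=
          bna_le ⟨h0, hsmul, hadd, hmul, hone⟩ _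
      _ ≤ ∑ j : Fin k, dist a b * N (Pi.single j 1) := by
          apply Finset.sum_le_sum
          intro j _
          apply mul_le_mul_of_nonneg_right _ (bna_nonneg ⟨h0, hsmul, hadd, hmul, hone⟩ _)
          have := dist_le_pi_dist a b j
          simpa [dist_eq_norm] using this
      _ = C * dist a b := by rw [← Finset.mul_sum, hC, mul_comm]
  have : dist (N a) (N b) ≤ C * dist a b := by
    rw [Real.dist_eq]; exact le_trans (habs a b) hle
  have hcb : C * dist a b < ε := by
    calc C * dist a b ≤ (C + 1) * dist a b := by nlinarith [dist_nonneg (x := a) (y := b)]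
      _ < (C + 1) * (ε / (C + 1)) := by
          apply mul_lt_mul_of_pos_left hab; positivity
      _ = ε := by field_simp
  linarith

lemma cons_add (k : ℕ) (u u' : Fin k → ℂ) : consZ (u + u') = consZ u + consZ u' := by
  funext i
  refine Fin.cases ?_ ?_ i <;> simp

lemma cons_smul (k : ℕ) (c : ℂ) (u : Fin k → ℂ) : consZ (c • u) = c • consZ u := by
  funext i
  refine Fin.cases ?_ ?_ i <;> simp

lemma cons_mul (k : ℕ) (u u' : Fin k → ℂ) : consZ (u * u') = consZ u * consZ u' := by
  funext i
  refine Fin.cases ?_ ?_ i <;> simp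

end aux

/-- Let `N` be a Banach algebra norm on `ℂ^{k+1}` (`k+1 ≥ 2`) satisfying von Neumann's
inequality with closed unit ball `V`, and let `B = V̂ ⊆ ℂ^k` be the slice
`{(v₂,...,v_{k+1}) : (0,v₂,...,v_{k+1}) ∈ V}`.  Then `B` is a closed subset of the closed
unit polydisk, is convex, balanced and absorbing, satisfies `B·B ⊆ B`, and is invariant
under every polynomial `p` with `p(0) = 0` and `sup{|p(z)| : |z| ≤ 1} ≤ 1`. -/
theorem stmt8 (k : ℕ) (hk : 1 ≤ k) (N : (Fin (k + 1) → ℂ) → ℝ)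
    (hN : IsBanachAlgebraNorm (k + 1) N) (hvn : SatisfiesVonNeumann (k + 1) N)
    (V : Set (Fin (k + 1) → ℂ)) (hV : V = {v | N v ≤ 1})
    (B : Set (Fin k → ℂ)) (hB : B = {u | Fin.cons (0 : ℂ) u ∈ V}) :
    IsClosed B ∧ (∀ u ∈ B, ∀ i : Fin k, ‖u i‖ ≤ 1) ∧
    Convex ℝ B ∧ Balanced ℂ B ∧ Absorbent ℂ B ∧
    (∀ u ∈ B, ∀ u' ∈ B, u * u' ∈ B) ∧
    (∀ p : Polynomial ℂ, Polynomial.eval (0 : ℂ) p = 0 → supDisk p ≤ 1 →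
      ∀ u ∈ B, (fun i => Polynomial.eval (u i) p) ∈ B) := by
  obtain ⟨h0, hsmul, hadd, hmul, hone⟩ := hN
  have hN' : IsBanachAlgebraNorm (k + 1) N := ⟨h0, hsmul, hadd, hmul, hone⟩
  have hBmem : ∀ u : Fin k → ℂ, u ∈ B ↔ N (consZ u) ≤ 1 := by
    intro u; rw [hB, hV]; rfl
  refine ⟨?_, ?_, ?_, ?_, ?_, ?_, ?_⟩
  · -- closed
    have : B = (fun u : Fin k → ℂ => N (consZ u)) ⁻¹' Set.Iic 1 := by
      ext u; simp [hBmem u]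
    rw [this]
    have hcons : Continuous (fun u : Fin k → ℂ => consZ u) := by
      apply continuous_pi; intro i
      refine Fin.cases ?_ ?_ i
      · simpa using continuous_const
      · intro j; simpa using continuous_apply j
    exact IsClosed.preimage ((bna_continuous hN').comp hcons) isClosed_Iic
  · -- polydisk
    intro u hu i
    have := bna_coord hN' (consZ u) i.succ
    simpa using le_trans this ((hBmem u).mp hu)
  · -- convex
    intro u hu u' hu' a b ha hb hab
    rw [hBmem]
    have h1 : consZ (a • u + b • u')
        = (a : ℂ) • consZ u + (b : ℂ) • consZ u' := by
      have e1 : a • u = (a : ℂ) • u := by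
        funext i; simp [Complex.real_smul]
      have e2 : b • u' = (b : ℂ) • u' := by
        funext i; simp [Complex.real_smul]
      rw [e1, e2, cons_add, cons_smul, cons_smul]
    show N (consZ (a • u + b • u')) ≤ 1
    rw [h1]
    calc N ((a : ℂ) • consZ u + (b : ℂ) • consZ u')
        ≤ N ((a : ℂ) • consZ u) + N ((b : ℂ) • consZ u') := hadd _ _
      _ = a * N (consZ u) + b * N (consZ u') := by
          rw [hsmul, hsmul]
          simp [Complex.norm_real, abs_of_nonneg ha, abs_of_nonneg hb]
      _ ≤ a * 1 + b * 1 :=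
          add_le_add (mul_le_mul_of_nonneg_left ((hBmem u).mp hu) ha)
            (mul_le_mul_of_nonneg_left ((hBmem u').mp hu') hb)
      _ = 1 := by linarith
  · -- balanced
    intro c hc u hu
    obtain ⟨x, hx, rfl⟩ := hu
    rw [hBmem] at hx ⊢
    rw [cons_smul, hsmul]
    calc ‖c‖ * N (consZ x) ≤ 1 * 1 :=
          mul_le_mul hc hx (bna_nonneg hN' _) zero_le_one
      _ = 1 := one_mul 1
  · -- absorbent
    intro x
    rw [absorbs_iff_norm]
    refine ⟨max 1 (N (consZ x)), fun c hc => ?_⟩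
    have hc1 : 1 ≤ ‖c‖ := le_trans (le_max_left _ _) hc
    have hcne : c ≠ 0 := by
      intro h; rw [h, norm_zero] at hc1; linarith
    intro y hy
    rcases hy with rfl
    rw [Set.mem_smul_set_iff_inv_smul_mem₀ hcne, hBmem, cons_smul, hsmul]
    have hNx : N (consZ y) ≤ ‖c‖ := le_trans (le_max_right _ _) hc
    rw [norm_inv]
    rw [inv_mul_le_iff₀ (by linarith)]
    simpa using hNx
  · -- multiplicative
    intro u hu u' hu'
    rw [hBmem] at hu hu' ⊢
    rw [cons_mul]
    calc N (consZ u * consZ u')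
        ≤ N (consZ u) * N (consZ u') := hmul _ _
      _ ≤ 1 * 1 := mul_le_mul hu hu' (bna_nonneg hN' _) zero_le_one
      _ = 1 := one_mul 1
  · -- polynomial invariance
    intro p hp0 hps u hu
    rw [hBmem] at hu ⊢
    have key := hvn (consZ u) hu p
    have heq : (fun i : Fin (k + 1) => Polynomial.eval (consZ u i) p)
        = consZ (fun i => Polynomial.eval (u i) p) := by
      funext i
      refine Fin.cases ?_ ?_ i
      · simp [hp0]
      · intro j; simp
    rw [heq] at key
    exact le_trans key hps
end

section
/- Fix 0 < r ≤ 1 and let φ_a(z) := (z-a)/(1 - conj(a)·z) for |a| < 1. Then the set Ṽ := {(a, v₂, v₃) ∈ ℂ³ : |a| < 1 and |φ_a(v₂)| + |φ_a(v₃)| ≤ r} is not a convex subset of ℂ³. -/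
/-- The elementary Möbius map `φ_a(z) = (z - a)/(1 - conj(a)·z)`. -/
noncomputable def mobius (a z : ℂ) : ℂ := (z - a) / (1 - (starRingEnd ℂ) a * z)

/-- Fix `0 < r ≤ 1`.  The set
`Ṽ = {(a,v₂,v₃) ∈ ℂ³ : |a| < 1 and |φ_a(v₂)| + |φ_a(v₃)| ≤ r}` is not convex. -/
theorem stmt9 (r : ℝ) (hr0 : 0 < r) (hr1 : r ≤ 1) :
    ¬ Convex ℝ {v : Fin 3 → ℂ | ‖v 0‖ < 1 ∧
        ‖mobius (v 0) (v 1)‖ + ‖mobius (v 0) (v 2)‖ ≤ r} := by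
  intro h
  set c : ℂ := (r : ℂ) with hc
  have h2r : (0:ℝ) < 2 - r := by linarith
  have h4r : (0:ℝ) < 4 - r := by linarith
  have h2 : (2:ℂ) - c ≠ 0 := by
    have : ((2 - r : ℝ) : ℂ) ≠ 0 := by exact_mod_cast h2r.ne'
    push_cast at this; exact this
  have h4 : (4:ℂ) - c ≠ 0 := by
    have : ((4 - r : ℝ) : ℂ) ≠ 0 := by exact_mod_cast h4r.ne'
    push_cast at this; exact this
  set p : ℂ := (1 - 2*c) / (2 - c) with hp
  have hconj : (starRingEnd ℂ) (1/2 : ℂ) = 1/2 := by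
    norm_num [Complex.ext_iff]
  -- mobius (1/2) (1/2) = 0
  have m00 : mobius (1/2) (1/2) = 0 := by
    simp [mobius]
  -- denominator for p
  have hd : (1:ℂ) - (starRingEnd ℂ) (1/2 : ℂ) * p = 3 / (2*(2-c)) := by
    rw [hconj, hp]; field_simp; ring
  have hd0 : (1:ℂ) - (starRingEnd ℂ) (1/2 : ℂ) * p ≠ 0 := by
    rw [hd]
    exact div_ne_zero (by norm_num) (by simp [h2])
  -- mobius (1/2) p = -c
  have m0p : mobius (1/2) p = -c := by
    rw [mobius, div_eq_iff hd0, hd, hp]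
    field_simp; ring
  have hnc : ‖(-c : ℂ)‖ = r := by
    rw [norm_neg, hc, Complex.norm_real, Real.norm_eq_abs, abs_of_pos hr0]
  -- the two endpoints
  set x : Fin 3 → ℂ := ![1/2, 1/2, p] with hx
  set y : Fin 3 → ℂ := ![1/2, p, 1/2] with hy
  have hhalf : ‖(1/2 : ℂ)‖ < 1 := by norm_num
  have hxmem : x ∈ {v : Fin 3 → ℂ | ‖v 0‖ < 1 ∧
      ‖mobius (v 0) (v 1)‖ + ‖mobius (v 0) (v 2)‖ ≤ r} := by
    refine ⟨by simpa [hx] using hhalf, ?_⟩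
    show ‖mobius (x 0) (x 1)‖ + ‖mobius (x 0) (x 2)‖ ≤ r
    have e0 : x 0 = 1/2 := rfl
    have e1 : x 1 = 1/2 := rfl
    have e2 : x 2 = p := rfl
    rw [e0, e1, e2, m00, m0p, hnc, norm_zero, zero_add]
  have hymem : y ∈ {v : Fin 3 → ℂ | ‖v 0‖ < 1 ∧
      ‖mobius (v 0) (v 1)‖ + ‖mobius (v 0) (v 2)‖ ≤ r} := by
    refine ⟨by simpa [hy] using hhalf, ?_⟩
    show ‖mobius (y 0) (y 1)‖ + ‖mobius (y 0) (y 2)‖ ≤ r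
    have e0 : y 0 = 1/2 := rfl
    have e1 : y 1 = p := rfl
    have e2 : y 2 = 1/2 := rfl
    rw [e0, e1, e2, m00, m0p, hnc, norm_zero, add_zero]
  have hz := h hxmem hymem (by norm_num : (0:ℝ) ≤ 1/2) (by norm_num : (0:ℝ) ≤ 1/2)
    (by norm_num)
  set z : Fin 3 → ℂ := (1/2 : ℝ) • x + (1/2 : ℝ) • y with hzdef
  -- compute the midpoint coordinates
  have hz0 : z 0 = 1/2 := by
    show (1/2:ℝ) • (x 0) + (1/2:ℝ) • (y 0) = 1/2
    simp [hx, hy, Complex.real_smul]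
    norm_num
  set m : ℂ := (1/2 + p)/2 with hm
  have hz1 : z 1 = m := by
    show (1/2:ℝ) • (x 1) + (1/2:ℝ) • (y 1) = m
    simp only [hx, hy, hm, Complex.real_smul]
    show ((1/2:ℝ):ℂ) * (1/2) + ((1/2:ℝ):ℂ) * p = (1/2 + p)/2
    push_cast; ring
  have hz2 : z 2 = m := by
    show (1/2:ℝ) • (x 2) + (1/2:ℝ) • (y 2) = m
    simp only [hx, hy, hm, Complex.real_smul]
    show ((1/2:ℝ):ℂ) * p + ((1/2:ℝ):ℂ) * (1/2) = (1/2 + p)/2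
    push_cast; ring
  -- denominator for m
  have hdm : (1:ℂ) - (starRingEnd ℂ) (1/2 : ℂ) * m = 3*(4-c) / (8*(2-c)) := by
    rw [hconj, hm, hp]; field_simp; ring
  have hdm0 : (1:ℂ) - (starRingEnd ℂ) (1/2 : ℂ) * m ≠ 0 := by
    rw [hdm]
    exact div_ne_zero (mul_ne_zero (by norm_num) h4) (by simp [h2])
  have m0m : mobius (1/2) m = -(2*c) / (4 - c) := by
    rw [mobius, div_eq_iff hdm0, hdm, hm, hp]
    field_simp; ring
  have hnm : ‖mobius (1/2) m‖ = 2*r / (4 - r) := by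
    rw [m0m]
    have : (-(2*c) / (4 - c) : ℂ) = ((-(2*r)/(4-r) : ℝ) : ℂ) := by
      push_cast; ring
    rw [this, Complex.norm_real, Real.norm_eq_abs, abs_div, abs_of_nonpos (by linarith), abs_of_pos h4r]
    ring
  obtain ⟨-, hle⟩ := hz
  rw [hz0, hz1, hz2, hnm] at hle
  rw [← add_div, div_le_iff₀ h4r] at hle
  nlinarith
end

section
/- Let Q = (qᵢⱼ) be a positive definite (hence invertible) k×k complex matrix and let w = (w₁,...,w_k) ∈ ℂ^k. Then ‖Q^{1/2}·Diag(w)·Q^{-1/2}‖ ≤ 1 in the operator norm on ℂ^k if and only if the k×k matrix with (i,j) entry (1 - conj(wᵢ)wⱼ)·qᵢⱼ is positive semidefinite, where Diag(w) is the diagonal matrix with diagonal entries w₁,...,w_k and Q^{1/2} is the positive square root of Q. -/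
open scoped ComplexOrder
open scoped Matrix

/-- The square root of a positive semidefinite matrix, as `Matrix.PosSemidef.sqrt` was defined
in Mathlib of December 2024 (that declaration has since been removed in favour of `CFC.sqrt`). -/
noncomputable def Matrix.PosSemidef.sqrt' {n 𝕜 : Type*} [Fintype n] [RCLike 𝕜] [DecidableEq n]
    {A : Matrix n n 𝕜} (hA : A.PosSemidef) : Matrix n n 𝕜 :=
  hA.1.eigenvectorUnitary.1 * Matrix.diagonal ((↑) ∘ (√·) ∘ hA.1.eigenvalues) *
    (star hA.1.eigenvectorUnitary : Matrix n n 𝕜)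

/-- Let `Q` be a positive definite `k×k` complex matrix and `w ∈ ℂ^k`.  Then
`‖Q^{1/2}·Diag(w)·Q^{-1/2}‖ ≤ 1` (operator norm induced by the Euclidean norm) if and
only if the matrix with entries `(1 - conj(wᵢ)wⱼ)·qᵢⱼ` is positive semidefinite. -/
theorem stmt12 (k : ℕ) (Q : Matrix (Fin k) (Fin k) ℂ) (hQ : Q.PosDef)
    (w : Fin k → ℂ) :
    ‖Matrix.toEuclideanCLM (𝕜 := ℂ)
        (Matrix.PosSemidef.sqrt' hQ.posSemidef * Matrix.diagonal w *
          (Matrix.PosSemidef.sqrt' hQ.posSemidef)⁻¹)‖ ≤ 1 ↔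
    (Matrix.of fun i j => (1 - (starRingEnd ℂ) (w i) * w j) * Q i j).PosSemidef := by
  classical
  set S := Matrix.PosSemidef.sqrt' hQ.posSemidef with hSdef
  have hS : Matrix.PosSemidef S := by
    have hd : (Matrix.diagonal ((RCLike.ofReal : ℝ → ℂ) ∘ (√·) ∘
        hQ.posSemidef.1.eigenvalues)).PosSemidef :=
      Matrix.posSemidef_diagonal_iff.mpr fun i => by
        simp only [Function.comp_apply]
        exact Complex.zero_le_real.mpr (Real.sqrt_nonneg _)
    exact hd.mul_mul_conjTranspose_same _
  have hSH : Sᴴ = S := hS.1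
  have hSS : S * S = Q := by
    have hU := Unitary.coe_star_mul_self hQ.posSemidef.1.eigenvectorUnitary
    have hsp := hQ.posSemidef.1.spectral_theorem
    rw [Unitary.conjStarAlgAut_apply] at hsp
    conv_rhs => rw [hsp]
    rw [hSdef, Matrix.PosSemidef.sqrt']
    simp only [mul_assoc]
    rw [← mul_assoc (star _ : Matrix (Fin k) (Fin k) ℂ), hU, one_mul,
      ← mul_assoc (Matrix.diagonal _), Matrix.diagonal_mul_diagonal]
    congr 3
    funext i
    simp only [Function.comp_apply]
    rw [← RCLike.ofReal_mul, Real.mul_self_sqrt (Matrix.PosSemidef.eigenvalues_nonneg hQ.posSemidef i)]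
  clear_value S
  have hdet : IsUnit (Matrix.det S) := by
    have hQu : IsUnit Q.det := (Matrix.isUnit_iff_isUnit_det Q).mp hQ.isUnit
    rw [← hSS, Matrix.det_mul] at hQu
    exact isUnit_of_mul_isUnit_left hQu
  have hinv : S⁻¹ * S = 1 := Matrix.nonsing_inv_mul S hdet
  have hinv' : S * S⁻¹ = 1 := Matrix.mul_nonsing_inv S hdet
  set D := Matrix.diagonal w with hD
  have hM : (Matrix.of fun i j => (1 - (starRingEnd ℂ) (w i) * w j) * Q i j)
      = Q - Dᴴ * Q * D := by
    ext i j
    simp [hD, Matrix.diagonal_conjTranspose, Matrix.diagonal_mul, Matrix.mul_diagonal,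
      Matrix.sub_apply]
    ring
  -- key quadratic form identity
  have key : ∀ (B : Matrix (Fin k) (Fin k) ℂ) (x : Fin k → ℂ),
      star x ⬝ᵥ (Bᴴ * Q * B) *ᵥ x
        = ((‖(WithLp.equiv 2 (Fin k → ℂ)).symm ((S * B) *ᵥ x)‖ : ℝ) : ℂ) ^ 2 := by
    intro B x
    have h1 : star x ⬝ᵥ (Bᴴ * Q * B) *ᵥ x
        = star ((S * B) *ᵥ x) ⬝ᵥ ((S * B) *ᵥ x) := by
      rw [Matrix.star_mulVec, Matrix.dotProduct_mulVec, Matrix.dotProduct_mulVec,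
        Matrix.vecMul_vecMul]
      congr 2
      rw [Matrix.conjTranspose_mul, hSH, ← hSS]
      noncomm_ring
    rw [h1, dotProduct_comm, show ∀ v : Fin k → ℂ, v ⬝ᵥ star v = inner ℂ
      ((WithLp.equiv 2 (Fin k → ℂ)).symm v) ((WithLp.equiv 2 (Fin k → ℂ)).symm v) from
      fun v => rfl, inner_self_eq_norm_sq_to_K]
    norm_cast
  have hHerm : (Q - Dᴴ * Q * D).IsHermitian :=
    hQ.1.sub (Matrix.isHermitian_conjTranspose_mul_mul D hQ.1)
  have quad : ∀ x : Fin k → ℂ,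
      (0 ≤ star x ⬝ᵥ (Q - Dᴴ * Q * D) *ᵥ x) ↔
      ‖(WithLp.equiv 2 (Fin k → ℂ)).symm ((S * D) *ᵥ x)‖
        ≤ ‖(WithLp.equiv 2 (Fin k → ℂ)).symm (S *ᵥ x)‖ := by
    intro x
    have k1 := key 1 x
    simp only [Matrix.conjTranspose_one, Matrix.one_mul, Matrix.mul_one] at k1
    rw [Matrix.sub_mulVec, dotProduct_sub, k1, key D x, sub_nonneg]
    norm_cast
    exact (pow_le_pow_iff_left₀ (norm_nonneg _) (norm_nonneg _) two_ne_zero)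
  have hT : ∀ x : Fin k → ℂ,
      (Matrix.toEuclideanCLM (𝕜 := ℂ) (S * D * S⁻¹)) ((WithLp.equiv 2 (Fin k → ℂ)).symm x)
        = (WithLp.equiv 2 (Fin k → ℂ)).symm ((S * D * S⁻¹) *ᵥ x) :=
    fun x => Matrix.toEuclideanCLM_toLp _ x
  rw [hM]
  constructor
  · intro h
    refine Matrix.PosSemidef.of_dotProduct_mulVec_nonneg hHerm fun x => ?_
    refine (quad x).mpr ?_
    have h2 := (Matrix.toEuclideanCLM (𝕜 := ℂ)
        (S * D * S⁻¹)).le_opNorm ((WithLp.equiv 2 (Fin k → ℂ)).symm (S *ᵥ x))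
    rw [hT] at h2
    have h3 : (S * D * S⁻¹) *ᵥ (S *ᵥ x) = (S * D) *ᵥ x := by
      rw [Matrix.mulVec_mulVec, mul_assoc (S * D), hinv, mul_one]
    rw [h3] at h2
    calc ‖(WithLp.equiv 2 (Fin k → ℂ)).symm ((S * D) *ᵥ x)‖
        ≤ ‖Matrix.toEuclideanCLM (𝕜 := ℂ) (S * D * S⁻¹)‖
          * ‖(WithLp.equiv 2 (Fin k → ℂ)).symm (S *ᵥ x)‖ := h2
      _ ≤ 1 * ‖(WithLp.equiv 2 (Fin k → ℂ)).symm (S *ᵥ x)‖ :=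
          mul_le_mul_of_nonneg_right h (norm_nonneg _)
      _ = _ := one_mul _
  · intro hPSD
    refine (Matrix.toEuclideanCLM (𝕜 := ℂ) (S * D * S⁻¹)).opNorm_le_bound zero_le_one
      fun y => ?_
    obtain ⟨x, rfl⟩ : ∃ x : Fin k → ℂ, (WithLp.equiv 2 (Fin k → ℂ)).symm x = y :=
      ⟨WithLp.equiv 2 (Fin k → ℂ) y, (WithLp.equiv 2 (Fin k → ℂ)).symm_apply_apply y⟩
    rw [hT, one_mul]
    have h4 := (quad (S⁻¹ *ᵥ x)).mp (hPSD.dotProduct_mulVec_nonneg _)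
    have h5 : (S * D) *ᵥ (S⁻¹ *ᵥ x) = (S * D * S⁻¹) *ᵥ x := by
      rw [Matrix.mulVec_mulVec]
    have h6 : S *ᵥ (S⁻¹ *ᵥ x) = x := by
      rw [Matrix.mulVec_mulVec, hinv', Matrix.one_mulVec]
    rwa [h5, h6] at h4
end

section
/- Let 0 < c ≤ d and let S be a set of k×k positive semidefinite complex matrices such that c·I ≤ P ≤ d·I in the Loewner order for every P ∈ S. Then for every finite collection P₁,...,P_m ∈ S and positive semidefinite Q₁,...,Q_m ∈ M_k(ℂ), the matrix R := P₁∗Q₁ + ⋯ + P_m∗Q_m satisfies R ≥ (c/d)·Diag(R) in the Loewner order, where ∗ is the Schur (entrywise) product and Diag(R) is the diagonal matrix with R's diagonal entries. In particular, the Schur ideal generated by S is non-trivial and bounded. -/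
open scoped ComplexOrder

open Matrix

lemma psd_diag_nonneg {k : ℕ} {M : Matrix (Fin k) (Fin k) ℂ} (hM : M.PosSemidef)
    (a : Fin k) : 0 ≤ M a a := by
  have := hM.dotProduct_mulVec_nonneg (Pi.single a 1)
  simpa [dotProduct, mulVec, Pi.single_apply, Finset.mul_sum] using this

/-- Schur product theorem. -/
lemma hadamard_posSemidef {k : ℕ} {P Q : Matrix (Fin k) (Fin k) ℂ}
    (hP : P.PosSemidef) (hQ : Q.PosSemidef) : (Matrix.hadamard P Q).PosSemidef := by
  exact Matrix.PosSemidef.hadamard hP hQ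

lemma schur_main {k : ℕ} (c d : ℝ) (hc : 0 < c) (hcd : c ≤ d)
    (m : ℕ) (P Q : Fin m → Matrix (Fin k) (Fin k) ℂ)
    (hP : ∀ i, (P i).PosSemidef ∧ ((P i) - (c : ℂ) • 1).PosSemidef ∧
      ((d : ℂ) • 1 - P i).PosSemidef)
    (hQ : ∀ i, (Q i).PosSemidef) :
    ((∑ i, Matrix.hadamard (P i) (Q i)) -
        ((c / d : ℝ) : ℂ) • Matrix.diagonal
          (fun a => (∑ i, Matrix.hadamard (P i) (Q i)) a a)).PosSemidef := by
  have hd : (0:ℝ) < d := lt_of_lt_of_le hc hcd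
  have hdC : ((c/d : ℝ) : ℂ) * (d : ℂ) = (c : ℂ) := by
    push_cast
    field_simp
  set A : Matrix (Fin k) (Fin k) ℂ :=
    ∑ i, Matrix.hadamard ((P i) - (c : ℂ) • 1) (Q i) with hA
  set D : Matrix (Fin k) (Fin k) ℂ :=
    Matrix.diagonal (fun a => ∑ i, ((c/d : ℝ) : ℂ) * (((d:ℂ) - P i a a) * Q i a a)) with hD
  have hdecomp : (∑ i, Matrix.hadamard (P i) (Q i)) -
        ((c / d : ℝ) : ℂ) • Matrix.diagonal
          (fun a => (∑ i, Matrix.hadamard (P i) (Q i)) a a) = A + D := by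
    ext a b
    by_cases hab : a = b
    · subst hab
      simp only [hA, hD, Matrix.sub_apply, Matrix.smul_apply, diagonal_apply_eq, Matrix.add_apply,
        Matrix.sum_apply, hadamard_apply, smul_eq_mul, one_apply_eq,
        Finset.mul_sum]
      rw [← Finset.sum_add_distrib, ← Finset.sum_sub_distrib]
      refine Finset.sum_congr rfl fun i _ => ?_
      linear_combination (-(Q i a a)) * hdC
    · simp only [hA, hD, Matrix.sub_apply, Matrix.smul_apply, diagonal_apply_ne _ hab, Matrix.add_apply,
        Matrix.sum_apply, hadamard_apply, smul_eq_mul, one_apply_ne hab,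
        mul_zero, sub_zero, add_zero]
  rw [hdecomp]
  have hApsd : A.PosSemidef := by
    rw [hA]
    exact Finset.sum_induction _ _ (fun x y hx hy => hx.add hy)
      Matrix.PosSemidef.zero (fun i _ => hadamard_posSemidef (hP i).2.1 (hQ i))
  have hDpsd : D.PosSemidef := by
    rw [hD]
    refine Matrix.posSemidef_diagonal_iff.mpr fun a => ?_
    refine Finset.sum_nonneg fun i _ => ?_
    refine mul_nonneg ?_ (mul_nonneg ?_ (psd_diag_nonneg (hQ i) a))
    · exact_mod_cast (div_nonneg hc.le hd.le)
    · have := psd_diag_nonneg (hP i).2.2 a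
      simpa [Matrix.sub_apply, Matrix.smul_apply, one_apply_eq] using this
  exact hApsd.add hDpsd


/-- The Schur ideal generated by a set `S` of positive semidefinite matrices:
all finite sums `Σᵢ Pᵢ∗Qᵢ` with `Pᵢ ∈ S` and `Qᵢ` positive semidefinite, where `∗`
is the Schur (Hadamard, entrywise) product. -/
def schurIdealGen (k : ℕ) (S : Set (Matrix (Fin k) (Fin k) ℂ)) :
    Set (Matrix (Fin k) (Fin k) ℂ) :=
  {R | ∃ (m : ℕ) (P Q : Fin m → Matrix (Fin k) (Fin k) ℂ),
    (∀ i, P i ∈ S) ∧ (∀ i, (Q i).PosSemidef) ∧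
    R = ∑ i, Matrix.hadamard (P i) (Q i)}

/-- Let `0 < c ≤ d` and let `S` be a set of positive semidefinite `k×k` matrices
with `c·I ≤ P ≤ d·I` (Loewner order) for all `P ∈ S`.  Then every finite sum
`R = Σᵢ Pᵢ∗Qᵢ` with `Pᵢ ∈ S` and `Qᵢ` positive semidefinite satisfies
`R ≥ (c/d)·Diag(R)`; in particular the Schur ideal generated by `S` is
non-trivial and bounded. -/
theorem stmt14 (k : ℕ) (c d : ℝ) (hc : 0 < c) (hcd : c ≤ d)
    (S : Set (Matrix (Fin k) (Fin k) ℂ)) (hSne : S.Nonempty)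
    (hS : ∀ P ∈ S, P.PosSemidef ∧ (P - (c : ℂ) • 1).PosSemidef ∧
      ((d : ℂ) • 1 - P).PosSemidef) :
    (∀ (m : ℕ) (P Q : Fin m → Matrix (Fin k) (Fin k) ℂ),
      (∀ i, P i ∈ S) → (∀ i, (Q i).PosSemidef) →
      ((∑ i, Matrix.hadamard (P i) (Q i)) -
        ((c / d : ℝ) : ℂ) • Matrix.diagonal
          (fun a => (∑ i, Matrix.hadamard (P i) (Q i)) a a)).PosSemidef) ∧
    (∀ a : Fin k, ∃ R ∈ schurIdealGen k S, R a a ≠ 0) ∧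
    (∃ δ : ℝ, 0 < δ ∧ ∀ R ∈ schurIdealGen k S,
      (R - ((δ : ℂ) ^ 2) • Matrix.diagonal (fun a => R a a)).PosSemidef) := by
  have hd : (0:ℝ) < d := lt_of_lt_of_le hc hcd
  have part1 : ∀ (m : ℕ) (P Q : Fin m → Matrix (Fin k) (Fin k) ℂ),
      (∀ i, P i ∈ S) → (∀ i, (Q i).PosSemidef) →
      ((∑ i, Matrix.hadamard (P i) (Q i)) -
        ((c / d : ℝ) : ℂ) • Matrix.diagonal
          (fun a => (∑ i, Matrix.hadamard (P i) (Q i)) a a)).PosSemidef := by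
    intro m P Q hPmem hQ
    exact schur_main c d hc hcd m P Q (fun i => hS (P i) (hPmem i)) hQ
  refine ⟨part1, ?_, ?_⟩
  · intro a
    obtain ⟨P, hPS⟩ := hSne
    refine ⟨∑ _i : Fin 1, Matrix.hadamard P 1,
      ⟨1, fun _ => P, fun _ => 1, fun _ => hPS, fun _ => Matrix.PosSemidef.one, rfl⟩, ?_⟩
    have hle : 0 ≤ (P - (c : ℂ) • 1) a a := psd_diag_nonneg (hS P hPS).2.1 a
    have hle' : (c : ℂ) ≤ P a a := by
      have : (0:ℂ) ≤ P a a - (c:ℂ) := by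
        simpa [Matrix.sub_apply, Matrix.smul_apply, one_apply_eq] using hle
      exact sub_nonneg.mp this
    intro h0
    have hRaa : (∑ _i : Fin 1, Matrix.hadamard P 1) a a = P a a := by
      simp [Matrix.sum_apply, hadamard_apply, one_apply_eq]
    rw [hRaa] at h0
    rw [h0] at hle'
    have : c ≤ (0:ℝ) := by exact_mod_cast hle'
    linarith
  · refine ⟨Real.sqrt (c/d), Real.sqrt_pos.mpr (div_pos hc hd), ?_⟩
    rintro R ⟨m, P, Q, hPmem, hQ, rfl⟩
    have hsq : ((Real.sqrt (c/d) : ℂ)) ^ 2 = ((c/d : ℝ) : ℂ) := by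
      rw [← Complex.ofReal_pow, Real.sq_sqrt (div_nonneg hc.le hd.le)]
    rw [hsq]
    exact part1 m P Q hPmem hQ
end

section
/- Let D be a subset of the closed unit polydisk in ℂ^k and let w be a point of the closed unit polydisk with w ∉ D^⊥⊥. Then there exist idempotent matrices E₁,...,E_k ∈ M_k(ℂ) with EᵢEⱼ = δᵢⱼEᵢ and E₁+⋯+E_k = I such that ‖v₁E₁+⋯+v_kE_k‖ ≤ 1 for every v ∈ D, while ‖w₁E₁+⋯+w_kE_k‖ > 1. (The Eᵢ may be taken of the form P^{1/2}EᵢᵢP^{-1/2} for some positive definite P ∈ D^⊥ with ((1-conj(wᵢ)wⱼ)pᵢⱼ) not positive semidefinite.) -/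
open scoped ComplexOrder

/-- For `D ⊆ ℂ^k`, `D^⊥` is the set of positive semidefinite `k×k` matrices `P` such
that `((1 - conj(vᵢ)vⱼ)·pᵢⱼ)` is positive semidefinite for all `v ∈ D`. -/
def dPerp (k : ℕ) (D : Set (Fin k → ℂ)) : Set (Matrix (Fin k) (Fin k) ℂ) :=
  {P | P.PosSemidef ∧ ∀ v ∈ D,
    (Matrix.of fun i j => (1 - (starRingEnd ℂ) (v i) * v j) * P i j).PosSemidef}

/-- For a set `S` of positive semidefinite `k×k` matrices, `S^⊥ ⊆ ℂ^k` is the set of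
`w` such that `((1 - conj(wᵢ)wⱼ)·pᵢⱼ)` is positive semidefinite for all `P ∈ S`. -/
def sPerp (k : ℕ) (S : Set (Matrix (Fin k) (Fin k) ℂ)) : Set (Fin k → ℂ) :=
  {w | ∀ P ∈ S,
    (Matrix.of fun i j => (1 - (starRingEnd ℂ) (w i) * w j) * P i j).PosSemidef}

open Matrix

/-- positivity of the CLM associated to a matrix vs positive semidefiniteness -/
lemma auxClmPosIff {k : ℕ} (M : Matrix (Fin k) (Fin k) ℂ) :
    (Matrix.toEuclideanCLM (𝕜 := ℂ) M).IsPositive ↔ M.PosSemidef := by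
  rw [← ContinuousLinearMap.isPositive_toLinearMap_iff,
    Matrix.coe_toEuclideanCLM_eq_toEuclideanLin, Matrix.isPositive_toEuclideanLin_iff]

/-- the operator norm of a matrix is at most one iff `1 - AᴴA` is positive semidefinite -/
lemma auxNormLeOneIff {k : ℕ} (A : Matrix (Fin k) (Fin k) ℂ) :
    ‖Matrix.toEuclideanCLM (𝕜 := ℂ) A‖ ≤ 1 ↔ (1 - Aᴴ * A).PosSemidef := by
  set T := Matrix.toEuclideanCLM (𝕜 := ℂ) A with hT
  have hs : ‖star T * T‖ = ‖T‖ * ‖T‖ := by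
    have : star T * T = ContinuousLinearMap.adjoint T ∘L T := rfl
    rw [this]
    exact ContinuousLinearMap.norm_adjoint_comp_self T
  have h1 : ‖T‖ ≤ 1 ↔ ‖star T * T‖ ≤ 1 := by
    rw [hs]
    constructor
    · intro h; nlinarith [norm_nonneg T]
    · intro h; nlinarith [norm_nonneg T]
  rw [h1, CStarAlgebra.norm_le_one_iff_of_nonneg _ (star_mul_self_nonneg T),
    ← sub_nonneg, ContinuousLinearMap.nonneg_iff_isPositive]
  have h2 : 1 - star T * T = Matrix.toEuclideanCLM (𝕜 := ℂ) (1 - Aᴴ * A) := by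
    rw [map_sub, _root_.map_one, _root_.map_mul, ← Matrix.star_eq_conjTranspose, map_star]
  rw [h2, auxClmPosIff]

lemma auxQuadReal {k : ℕ} {M : Matrix (Fin k) (Fin k) ℂ} (hM : M.IsHermitian)
    (x : Fin k → ℂ) : star (star x ⬝ᵥ M *ᵥ x) = star x ⬝ᵥ M *ᵥ x := by
  conv_lhs => rw [star_dotProduct, star_star]
  rw [star_mulVec, ← dotProduct_mulVec, hM.eq]

lemma auxHermOf {k : ℕ} {P : Matrix (Fin k) (Fin k) ℂ} (hP : P.IsHermitian)
    (u : Fin k → ℂ) :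
    (Matrix.of fun i j => (1 - (starRingEnd ℂ) (u i) * u j) * P i j).IsHermitian := by
  ext i j
  have h1 : (starRingEnd ℂ) (P j i) = P i j := congrFun (congrFun hP i) j
  simp only [Matrix.conjTranspose_apply, Matrix.of_apply, Complex.star_def, _root_.map_mul,
    _root_.map_sub, _root_.map_one, Complex.conj_conj]
  rw [h1]
  ring

lemma auxOneSubNonneg (z : ℂ) (hz : ‖z‖ ≤ 1) : 0 ≤ 1 - (starRingEnd ℂ) z * z := by
  have h1 : (starRingEnd ℂ) z * z = ((Complex.normSq z : ℝ) : ℂ) :=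
    (Complex.normSq_eq_conj_mul_self).symm
  have h2 : (1 : ℂ) - ((Complex.normSq z : ℝ) : ℂ) = ((1 - Complex.normSq z : ℝ) : ℂ) := by
    push_cast; ring
  rw [h1, h2, Complex.zero_le_real]
  have h3 : Complex.normSq z = ‖z‖ ^ 2 := by
    rw [Complex.normSq_eq_norm_sq]
  nlinarith [norm_nonneg z]

lemma auxDiagPsd {k : ℕ} (u : Fin k → ℂ) (hu : ∀ i, ‖u i‖ ≤ 1) :
    (Matrix.diagonal fun i => 1 - (starRingEnd ℂ) (u i) * u i).PosSemidef :=
  Matrix.PosSemidef.diagonal (fun i => auxOneSubNonneg _ (hu i))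

lemma auxDecomp {k : ℕ} (P : Matrix (Fin k) (Fin k) ℂ) (t : ℝ) (u : Fin k → ℂ) :
    (Matrix.of fun i j => (1 - (starRingEnd ℂ) (u i) * u j) * (P + (t : ℂ) • 1) i j)
      = (Matrix.of fun i j => (1 - (starRingEnd ℂ) (u i) * u j) * P i j)
        + (t : ℂ) • Matrix.diagonal (fun i => 1 - (starRingEnd ℂ) (u i) * u i) := by
  ext i j
  by_cases h : i = j
  · subst h
    simp [Matrix.one_apply, Matrix.diagonal_apply]
    ring
  · simp [Matrix.one_apply, Matrix.diagonal_apply, h]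

lemma auxSumSingle {k : ℕ} (u : Fin k → ℂ) :
    ∑ i, u i • Matrix.diagonal (Pi.single i (1 : ℂ)) = Matrix.diagonal u := by
  ext a b
  by_cases hab : a = b
  · subst hab
    simp [Matrix.sum_apply, Matrix.diagonal_apply, Pi.single_apply]
  · simp [Matrix.sum_apply, Matrix.diagonal_apply, hab]

lemma auxSumOne {k : ℕ} :
    ∑ i, Matrix.diagonal (Pi.single i (1 : ℂ)) = (1 : Matrix (Fin k) (Fin k) ℂ) := by
  ext a b
  by_cases hab : a = b
  · subst hab
    simp [Matrix.sum_apply, Matrix.diagonal_apply, Pi.single_apply]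
  · simp [Matrix.sum_apply, Matrix.diagonal_apply, Matrix.one_apply, hab]

lemma auxSingleMul {k : ℕ} (i j : Fin k) :
    Matrix.diagonal (Pi.single i (1 : ℂ)) * Matrix.diagonal (Pi.single j 1) =
      if i = j then Matrix.diagonal (Pi.single i (1 : ℂ)) else 0 := by
  rw [Matrix.diagonal_mul_diagonal]
  by_cases h : i = j
  · subst h
    rw [if_pos rfl]
    have h0 : (fun a => Pi.single i (1 : ℂ) a * Pi.single i 1 a) = (Pi.single i 1 : Fin k → ℂ) := by
      funext a
      by_cases ha : a = i
      · subst ha; simp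
      · simp [Pi.single_apply, ha]
    rw [h0]
  · rw [if_neg h]
    have h0 : (fun a => Pi.single i (1 : ℂ) a * Pi.single j 1 a) = fun _ => (0 : ℂ) := by
      funext a
      by_cases hai : a = i
      · subst hai
        have haj : a ≠ j := fun haj => h (haj ▸ rfl)
        simp [Pi.single_apply, haj]
      · simp [Pi.single_apply, hai]
    calc Matrix.diagonal (fun a => Pi.single i (1 : ℂ) a * Pi.single j 1 a)
        = Matrix.diagonal (fun _ => (0 : ℂ)) := by rw [h0]
      _ = 0 := by ext a b; simp [Matrix.diagonal_apply]

open scoped MatrixOrder in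
lemma auxSqrt {k : ℕ} {P : Matrix (Fin k) (Fin k) ℂ} (hP : P.PosSemidef) :
    ∃ Q : Matrix (Fin k) (Fin k) ℂ, Q * Q = P ∧ Qᴴ = Q :=
  ⟨CFC.sqrt P, CFC.sqrt_mul_sqrt_self P hP.nonneg, (CFC.sqrt_nonneg P).posSemidef.1⟩

/-- Let `D` be a subset of the closed unit polydisk in `ℂ^k` and let `w` be a point of
the closed unit polydisk with `w ∉ D^⊥⊥`.  Then there exist matrix idempotents
`E₁,...,E_k` with `EᵢEⱼ = δᵢⱼEᵢ` and `E₁+⋯+E_k = I` such that `‖Σᵢ vᵢEᵢ‖ ≤ 1` for all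
`v ∈ D` while `‖Σᵢ wᵢEᵢ‖ > 1` (operator norm induced by the Euclidean norm). -/
theorem stmt15 (k : ℕ) (D : Set (Fin k → ℂ))
    (hD : ∀ v ∈ D, ∀ i : Fin k, ‖v i‖ ≤ 1)
    (w : Fin k → ℂ) (hw : ∀ i : Fin k, ‖w i‖ ≤ 1)
    (hwD : w ∉ sPerp k (dPerp k D)) :
    ∃ E : Fin k → Matrix (Fin k) (Fin k) ℂ,
      (∀ i j, E i * E j = if i = j then E i else 0) ∧
      (∑ i, E i = 1) ∧
      (∀ v ∈ D, ‖Matrix.toEuclideanCLM (𝕜 := ℂ) (∑ i, v i • E i)‖ ≤ 1) ∧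
      1 < ‖Matrix.toEuclideanCLM (𝕜 := ℂ) (∑ i, w i • E i)‖ := by
  classical
  -- extract a bad `P`
  have hwD' : ∃ P ∈ dPerp k D,
      ¬ (Matrix.of fun i j => (1 - (starRingEnd ℂ) (w i) * w j) * P i j).PosSemidef := by
    by_contra h
    push_neg at h
    exact hwD fun P hP => h P hP
  obtain ⟨P, ⟨hPpsd, hPD⟩, hPw⟩ := hwD'
  set Mw := (Matrix.of fun i j => (1 - (starRingEnd ℂ) (w i) * w j) * P i j) with hMwdef
  have hMwH : Mw.IsHermitian := auxHermOf hPpsd.1 w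
  -- a vector witnessing failure of positivity
  have hx : ∃ x : Fin k → ℂ, (star x ⬝ᵥ Mw *ᵥ x).re < 0 := by
    by_contra h
    push_neg at h
    apply hPw
    refine Matrix.PosSemidef.of_dotProduct_mulVec_nonneg hMwH fun x => ?_
    have him : (star x ⬝ᵥ Mw *ᵥ x).im = 0 :=
      Complex.conj_eq_iff_im.mp (auxQuadReal hMwH x)
    rw [Complex.le_def]
    exact ⟨by simpa using h x, by simp [him]⟩
  obtain ⟨x, hq0⟩ := hx
  set q0 : ℝ := (star x ⬝ᵥ Mw *ᵥ x).re with hq0def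
  set Dw := Matrix.diagonal (fun i => 1 - (starRingEnd ℂ) (w i) * w i) with hDwdef
  set c : ℝ := (star x ⬝ᵥ Dw *ᵥ x).re with hcdef
  have hc : 0 ≤ c := by
    have := (auxDiagPsd w hw).re_dotProduct_nonneg x
    simpa [hcdef, hDwdef, RCLike.re_eq_complex_re] using this
  set ε : ℝ := -q0 / (2 * (c + 1)) with hεdef
  have hε : 0 < ε := div_pos (by linarith) (by linarith)
  have hεmul : ε * (2 * (c + 1)) = -q0 := by
    rw [hεdef]
    field_simp
  have hkeylt : q0 + ε * c < 0 := by nlinarith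
  -- the perturbed matrix
  set P' := P + (ε : ℂ) • 1 with hP'def
  have hP'pd : P'.PosDef := by
    apply Matrix.PosDef.posSemidef_add hPpsd
    rw [Matrix.smul_one_eq_diagonal]
    refine Matrix.PosDef.diagonal (fun i => ?_)
    rw [Complex.zero_lt_real]
    exact hε
  -- P' is in dPerp
  have hP'mem : ∀ v ∈ D,
      (Matrix.of fun i j => (1 - (starRingEnd ℂ) (v i) * v j) * P' i j).PosSemidef := by
    intro v hv
    rw [hP'def, auxDecomp]
    apply (hPD v hv).add
    rw [← Matrix.diagonal_smul]
    exact Matrix.PosSemidef.diagonal fun i => by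
      have := auxOneSubNonneg (v i) (hD v hv i)
      have hε' : (0 : ℂ) ≤ (ε : ℂ) := by
        rw [Complex.zero_le_real]; linarith
      simpa [smul_eq_mul] using mul_nonneg hε' this
  -- failure of positivity for w at P'
  have hP'w : ¬ (Matrix.of fun i j =>
      (1 - (starRingEnd ℂ) (w i) * w j) * P' i j).PosSemidef := by
    rw [hP'def, auxDecomp]
    intro hpsd
    have hnn := hpsd.re_dotProduct_nonneg x
    rw [Matrix.add_mulVec, dotProduct_add, Matrix.smul_mulVec,
      dotProduct_smul] at hnn
    have h1 : 0 ≤ q0 + ε * c := by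
      have h2 : (star x ⬝ᵥ Mw *ᵥ x + (ε : ℂ) • (star x ⬝ᵥ Dw *ᵥ x)).re = q0 + ε * c := by
        simp [smul_eq_mul, hq0def, hcdef, Complex.add_re, Complex.re_ofReal_mul]
      rw [← h2]
      simpa [RCLike.re_eq_complex_re, hMwdef, hDwdef] using hnn
    linarith
  -- the square root of P'
  obtain ⟨Q, hQ2, hQH⟩ := auxSqrt hP'pd.posSemidef
  have hQdetunit : IsUnit Q.det := by
    have hdet : Q.det * Q.det = P'.det := by rw [← Matrix.det_mul, hQ2]
    have hne : P'.det ≠ 0 := hP'pd.det_pos.ne'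
    rw [isUnit_iff_ne_zero]
    intro h
    rw [h, mul_zero] at hdet
    exact hne hdet.symm
  have hQQi : Q * Q⁻¹ = 1 := Matrix.mul_nonsing_inv _ hQdetunit
  have hQiQ : Q⁻¹ * Q = 1 := Matrix.nonsing_inv_mul _ hQdetunit
  have hQiH : Q⁻¹ᴴ = Q⁻¹ := by rw [Matrix.conjTranspose_nonsing_inv, hQH]
  -- the idempotents
  set E : Fin k → Matrix (Fin k) (Fin k) ℂ :=
    fun i => Q * Matrix.diagonal (Pi.single i 1) * Q⁻¹ with hEdef
  have hconj : ∀ (A B : Matrix (Fin k) (Fin k) ℂ),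
      (Q * A * Q⁻¹) * (Q * B * Q⁻¹) = Q * (A * B) * Q⁻¹ := by
    intro A B
    simp only [Matrix.mul_assoc]
    rw [← Matrix.mul_assoc Q⁻¹ Q (B * Q⁻¹), hQiQ, Matrix.one_mul]
  have hEsum : ∀ u : Fin k → ℂ, ∑ i, u i • E i = Q * Matrix.diagonal u * Q⁻¹ := by
    intro u
    have : ∀ i : Fin k, u i • E i = Q * (u i • Matrix.diagonal (Pi.single i 1)) * Q⁻¹ := by
      intro i
      rw [hEdef]
      simp [Matrix.mul_smul, Matrix.smul_mul]
    rw [Finset.sum_congr rfl fun i _ => this i, ← Finset.sum_mul, ← Finset.mul_sum,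
      auxSumSingle]
  -- key identity for 1 - AᴴA
  have hone : (1 : Matrix (Fin k) (Fin k) ℂ) = Q⁻¹ * P' * Q⁻¹ := by
    calc (1 : Matrix (Fin k) (Fin k) ℂ) = (Q⁻¹ * Q) * (Q * Q⁻¹) := by
          rw [hQiQ, hQQi, Matrix.one_mul]
      _ = Q⁻¹ * (Q * Q) * Q⁻¹ := by simp only [Matrix.mul_assoc]
      _ = Q⁻¹ * P' * Q⁻¹ := by rw [hQ2]
  have hkey : ∀ u : Fin k → ℂ,
      1 - (Q * Matrix.diagonal u * Q⁻¹)ᴴ * (Q * Matrix.diagonal u * Q⁻¹)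
        = Q⁻¹ * (Matrix.of fun i j => (1 - (starRingEnd ℂ) (u i) * u j) * P' i j) * Q⁻¹ := by
    intro u
    have hAh : (Q * Matrix.diagonal u * Q⁻¹)ᴴ = Q⁻¹ * Matrix.diagonal (star u) * Q := by
      rw [Matrix.conjTranspose_mul, Matrix.conjTranspose_mul, Matrix.diagonal_conjTranspose,
        hQiH, hQH]
      simp [Matrix.mul_assoc]
    rw [hAh]
    have hmid : (Q⁻¹ * Matrix.diagonal (star u) * Q) * (Q * Matrix.diagonal u * Q⁻¹)
        = Q⁻¹ * (Matrix.diagonal (star u) * P' * Matrix.diagonal u) * Q⁻¹ := by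
      rw [← hQ2]
      simp only [Matrix.mul_assoc]
    rw [hmid, hone]
    rw [← Matrix.sub_mul, ← Matrix.mul_sub]
    congr 1
    congr 1
    ext i j
    simp only [Matrix.sub_apply, Matrix.of_apply, Matrix.diagonal_mul, Matrix.mul_diagonal,
      Pi.star_apply]
    simp only [Complex.star_def]
    ring
  have hwnorm : ∀ u : Fin k → ℂ,
      (‖Matrix.toEuclideanCLM (𝕜 := ℂ) (Q * Matrix.diagonal u * Q⁻¹)‖ ≤ 1 ↔
        (Matrix.of fun i j => (1 - (starRingEnd ℂ) (u i) * u j) * P' i j).PosSemidef) := by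
    intro u
    rw [auxNormLeOneIff, hkey u]
    constructor
    · intro h
      have h2 := h.conjTranspose_mul_mul_same Q
      have heq : Qᴴ * (Q⁻¹ * (Matrix.of fun i j =>
          (1 - (starRingEnd ℂ) (u i) * u j) * P' i j) * Q⁻¹) * Q
          = Matrix.of fun i j => (1 - (starRingEnd ℂ) (u i) * u j) * P' i j := by
        rw [hQH]
        simp only [Matrix.mul_assoc, hQiQ, Matrix.mul_one]
        rw [← Matrix.mul_assoc Q Q⁻¹, hQQi, Matrix.one_mul]
      rwa [heq] at h2
    · intro h
      have h2 := h.conjTranspose_mul_mul_same Q⁻¹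
      rwa [hQiH] at h2
  refine ⟨E, ?_, ?_, ?_, ?_⟩
  · intro i j
    rw [hEdef]
    simp only
    rw [hconj, auxSingleMul]
    split_ifs with h
    · rfl
    · rw [Matrix.mul_zero, Matrix.zero_mul]
  · have := hEsum (fun _ => 1)
    simp only [one_smul] at this
    rw [this]
    have : Matrix.diagonal (fun _ : Fin k => (1 : ℂ)) = 1 := Matrix.diagonal_one
    rw [this, Matrix.mul_one, hQQi]
  · intro v hv
    rw [hEsum v, hwnorm v]
    exact hP'mem v hv
  · rw [hEsum w]
    by_contra h
    push_neg at h
    exact hP'w ((hwnorm w).mp h)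
end

section
/- Let D be any subset of the closed unit polydisk in ℂ^k. Then HC(D) equals ℋ(D), the intersection of all hyperconvex subsets of ℂ^k that contain D. -/
/-- A complex polynomial in `m` variables has supremum at most `1` on the closed unit
polydisk of `ℂᵐ`. -/
def PolyContractive {m : ℕ} (p : MvPolynomial (Fin m) ℂ) : Prop :=
  ∀ z : Fin m → ℂ, (∀ j, ‖z j‖ ≤ 1) → ‖MvPolynomial.eval z p‖ ≤ 1

/-- The hyperconvex hull `HC(D)` of `D ⊆ ℂ^k`: the closure of the set of all vectors
`(p(w¹₁,...,wᵐ₁),...,p(w¹_k,...,wᵐ_k))` with `w¹,...,wᵐ ∈ D` and `p` a polynomial in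
`m` variables of supremum norm at most `1` on the closed unit polydisk of `ℂᵐ`. -/
def hcHull (k : ℕ) (D : Set (Fin k → ℂ)) : Set (Fin k → ℂ) :=
  closure {v | ∃ (m : ℕ) (w : Fin m → (Fin k → ℂ)) (p : MvPolynomial (Fin m) ℂ),
    (∀ l, w l ∈ D) ∧ PolyContractive p ∧
    v = fun i => MvPolynomial.eval (fun l => w l i) p}

/-- `H ⊆ ℂ^k` is hyperconvex: closed, bounded, absorbing, balanced, convex, and closed
under polynomial maps of supremum norm at most `1` on the closed unit polydisk. -/
def Hyperconvex (k : ℕ) (H : Set (Fin k → ℂ)) : Prop :=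
  IsClosed H ∧ Bornology.IsBounded H ∧ Absorbent ℂ H ∧ Balanced ℂ H ∧ Convex ℝ H ∧
  ∀ (m : ℕ) (a : Fin m → (Fin k → ℂ)) (p : MvPolynomial (Fin m) ℂ),
    (∀ l, a l ∈ H) → PolyContractive p →
    (fun i => MvPolynomial.eval (fun l => a l i) p) ∈ H

namespace Stmt17Aux

open MvPolynomial Metric Set

variable {k : ℕ}

/-- The set whose closure is the hyperconvex hull. -/
def preHull (k : ℕ) (D : Set (Fin k → ℂ)) : Set (Fin k → ℂ) :=
  {v | ∃ (m : ℕ) (w : Fin m → (Fin k → ℂ)) (p : MvPolynomial (Fin m) ℂ),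
    (∀ l, w l ∈ D) ∧ PolyContractive p ∧
    v = fun i => MvPolynomial.eval (fun l => w l i) p}

lemma hcHull_eq (k : ℕ) (D : Set (Fin k → ℂ)) : hcHull k D = closure (preHull k D) := rfl

lemma subset_preHull {D : Set (Fin k → ℂ)} : D ⊆ preHull k D := by
  intro v hv
  refine ⟨1, fun _ => v, X 0, fun _ => hv, ?_, ?_⟩
  · intro z hz; simpa using hz 0
  · funext i; simp

lemma preHull_norm_le {D : Set (Fin k → ℂ)} (hD : ∀ v ∈ D, ∀ i : Fin k, ‖v i‖ ≤ 1)
    {v : Fin k → ℂ} (hv : v ∈ preHull k D) (i : Fin k) : ‖v i‖ ≤ 1 := by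
  obtain ⟨m, w, p, hw, hp, rfl⟩ := hv
  exact hp _ fun l => hD _ (hw l) i

lemma eval_bind₁' {σ τ : Type*} (f : τ → ℂ) (g : σ → MvPolynomial τ ℂ)
    (φ : MvPolynomial σ ℂ) :
    MvPolynomial.eval f (MvPolynomial.bind₁ g φ)
      = MvPolynomial.eval (fun i => MvPolynomial.eval f (g i)) φ := by
  exact MvPolynomial.eval₂Hom_bind₁ (RingHom.id ℂ) f g φ

lemma polyClosed_preHull {D : Set (Fin k → ℂ)} (m : ℕ) (a : Fin m → (Fin k → ℂ))
    (p : MvPolynomial (Fin m) ℂ) (ha : ∀ l, a l ∈ preHull k D) (hp : PolyContractive p) :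
    (fun i => MvPolynomial.eval (fun l => a l i) p) ∈ preHull k D := by
  choose n w q hw hq hval using ha
  let τ := Σ l : Fin m, Fin (n l)
  let e : τ ≃ Fin (Fintype.card τ) := Fintype.equivFin τ
  refine ⟨Fintype.card τ, fun s => w (e.symm s).1 (e.symm s).2,
    MvPolynomial.bind₁ (fun l => MvPolynomial.rename (fun j => e ⟨l, j⟩) (q l)) p, ?_, ?_, ?_⟩
  · intro s; exact hw _ _
  · intro z hz
    rw [eval_bind₁']
    apply hp
    intro l
    rw [MvPolynomial.eval_rename]
    exact hq l _ fun j => hz _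
  · funext i
    rw [eval_bind₁']
    have h3 : (fun l => MvPolynomial.eval (fun s => w (e.symm s).1 (e.symm s).2 i)
        (MvPolynomial.rename (fun j => e ⟨l, j⟩) (q l))) = fun l => a l i := by
      funext l
      rw [MvPolynomial.eval_rename]
      have h2 : ((fun s => w (e.symm s).1 (e.symm s).2 i) ∘ fun j => e ⟨l, j⟩)
          = fun j => w l j i := by
        funext j
        show w (e.symm (e ⟨l, j⟩)).1 (e.symm (e ⟨l, j⟩)).2 i = w l j i
        rw [Equiv.symm_apply_apply]
      rw [h2]
      exact (congrFun (hval l) i).symm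
    rw [h3]

lemma balanced_preHull {D : Set (Fin k → ℂ)} : Balanced ℂ (preHull k D) := by
  intro c hc x hx
  rw [Set.mem_smul_set] at hx
  obtain ⟨v, ⟨m, w, p, hw, hp, rfl⟩, rfl⟩ := hx
  refine ⟨m, w, MvPolynomial.C c * p, hw, ?_, ?_⟩
  · intro z hz
    rw [map_mul, MvPolynomial.eval_C, norm_mul]
    calc ‖c‖ * ‖MvPolynomial.eval z p‖ ≤ 1 * 1 :=
      mul_le_mul hc (hp z hz) (norm_nonneg _) zero_le_one
    _ = 1 := one_mul 1
  · funext i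
    simp [Pi.smul_apply, smul_eq_mul, map_mul, MvPolynomial.eval_C]

lemma convex_preHull {D : Set (Fin k → ℂ)} : Convex ℝ (preHull k D) := by
  rintro x ⟨m1, w1, p1, hw1, hp1, rfl⟩ y ⟨m2, w2, p2, hw2, hp2, rfl⟩ a b ha hb hab
  refine ⟨m1 + m2, Fin.append w1 w2,
    MvPolynomial.C (a : ℂ) * MvPolynomial.rename (Fin.castAdd m2) p1 +
      MvPolynomial.C (b : ℂ) * MvPolynomial.rename (Fin.natAdd m1) p2, ?_, ?_, ?_⟩
  · intro l
    refine Fin.addCases (fun j => ?_) (fun j => ?_) l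
    · rw [Fin.append_left]; exact hw1 j
    · rw [Fin.append_right]; exact hw2 j
  · intro z hz
    have h1 : ‖MvPolynomial.eval (z ∘ Fin.castAdd m2) p1‖ ≤ 1 := hp1 _ fun j => hz _
    have h2 : ‖MvPolynomial.eval (z ∘ Fin.natAdd m1) p2‖ ≤ 1 := hp2 _ fun j => hz _
    simp only [map_add, map_mul, MvPolynomial.eval_C, MvPolynomial.eval_rename]
    calc ‖(a : ℂ) * MvPolynomial.eval (z ∘ Fin.castAdd m2) p1 +
            (b : ℂ) * MvPolynomial.eval (z ∘ Fin.natAdd m1) p2‖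
        ≤ ‖(a : ℂ)‖ * ‖MvPolynomial.eval (z ∘ Fin.castAdd m2) p1‖ +
            ‖(b : ℂ)‖ * ‖MvPolynomial.eval (z ∘ Fin.natAdd m1) p2‖ := by
          refine (norm_add_le _ _).trans ?_
          rw [norm_mul, norm_mul]
      _ ≤ a * 1 + b * 1 := by
          have hna : ‖(a : ℂ)‖ = a := by rw [Complex.norm_real, Real.norm_of_nonneg ha]
          have hnb : ‖(b : ℂ)‖ = b := by rw [Complex.norm_real, Real.norm_of_nonneg hb]
          rw [hna, hnb]
          gcongr
      _ = 1 := by linarith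
  · funext i
    simp only [Pi.add_apply, Pi.smul_apply, map_add, map_mul, MvPolynomial.eval_C,
      MvPolynomial.eval_rename]
    have hc1 : ((fun l => Fin.append w1 w2 l i) ∘ Fin.castAdd m2) = fun j => w1 j i := by
      funext j; simp [Function.comp, Fin.append_left]
    have hc2 : ((fun l => Fin.append w1 w2 l i) ∘ Fin.natAdd m1) = fun j => w2 j i := by
      funext j; simp [Function.comp, Fin.append_right]
    rw [hc1, hc2, Complex.real_smul, Complex.real_smul]

lemma polyClosed_closure {S : Set (Fin k → ℂ)}
    (hS : ∀ (m : ℕ) (a : Fin m → (Fin k → ℂ)) (p : MvPolynomial (Fin m) ℂ),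
      (∀ l, a l ∈ S) → PolyContractive p →
      (fun i => MvPolynomial.eval (fun l => a l i) p) ∈ S)
    (m : ℕ) (a : Fin m → (Fin k → ℂ)) (p : MvPolynomial (Fin m) ℂ)
    (ha : ∀ l, a l ∈ closure S) (hp : PolyContractive p) :
    (fun i => MvPolynomial.eval (fun l => a l i) p) ∈ closure S := by
  have hF : Continuous fun b : Fin m → Fin k → ℂ =>
      (fun i => MvPolynomial.eval (fun l => b l i) p : Fin k → ℂ) := by
    refine continuous_pi fun i => ?_
    have hc1 : Continuous fun b : Fin m → Fin k → ℂ => fun l => b l i :=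
      continuous_pi fun l => (continuous_apply i).comp (continuous_apply l)
    exact (MvPolynomial.continuous_eval p).comp hc1
  have hmap : Set.MapsTo (fun b : Fin m → Fin k → ℂ =>
      (fun i => MvPolynomial.eval (fun l => b l i) p : Fin k → ℂ))
      (Set.pi Set.univ fun _ => S) S :=
    fun b hb => hS m b p (fun l => hb l (Set.mem_univ l)) hp
  have ha' : a ∈ closure (Set.pi Set.univ fun _ : Fin m => S) := by
    rw [closure_pi_set]
    exact fun l _ => ha l
  exact hmap.closure hF ha'

lemma hcHull_subset_ball {D : Set (Fin k → ℂ)} (hD : ∀ v ∈ D, ∀ i : Fin k, ‖v i‖ ≤ 1) :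
    hcHull k D ⊆ Metric.closedBall 0 1 := by
  rw [hcHull_eq]
  refine closure_minimal (fun v hv => ?_) Metric.isClosed_closedBall
  rw [Metric.mem_closedBall, dist_pi_le_iff zero_le_one]
  intro i
  rw [Pi.zero_apply, dist_zero_right]
  exact preHull_norm_le hD hv i

lemma differentiable_eval {m : ℕ} (p : MvPolynomial (Fin m) ℂ) (z : ℂ → Fin m → ℂ)
    (hz : ∀ l, Differentiable ℂ fun t => z t l) :
    Differentiable ℂ fun t => MvPolynomial.eval (z t) p := by
  induction p using MvPolynomial.induction_on with
  | C a => simp only [MvPolynomial.eval_C]; exact differentiable_const a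
  | add p q hp hq => simp only [map_add]; exact hp.add hq
  | mul_X p l hp => simp only [map_mul, MvPolynomial.eval_X]; exact hp.mul (hz l)

/-- The key approximation: every point in the pre-hull of `D ∪ εB` is `3ε`-close to the
pre-hull of `D`. -/
lemma approx {D : Set (Fin k → ℂ)} (hD : ∀ v ∈ D, ∀ i : Fin k, ‖v i‖ ≤ 1)
    {ε : ℝ} (hε : 0 < ε) (hε1 : ε < 1) {u : Fin k → ℂ}
    (hu : u ∈ preHull k (D ∪ {v | ∀ i, ‖v i‖ ≤ ε})) :
    ∃ u' ∈ preHull k D, dist u u' ≤ 3 * ε := by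
  classical
  obtain ⟨m, w, p, hw, hp, rfl⟩ := hu
  set τ := {l : Fin m // w l ∈ D} with hτ
  let e : τ ≃ Fin (Fintype.card τ) := Fintype.equivFin τ
  set g : Fin m → MvPolynomial (Fin (Fintype.card τ)) ℂ :=
    fun l => if h : w l ∈ D then MvPolynomial.X (e ⟨l, h⟩) else 0 with hg
  set q := MvPolynomial.bind₁ g p with hqdef
  set w' : Fin (Fintype.card τ) → Fin k → ℂ := fun s => w (e.symm s).1 with hw'
  have key : ∀ i, MvPolynomial.eval (fun s => w' s i) q
      = MvPolynomial.eval (fun l => if w l ∈ D then w l i else 0) p := by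
    intro i
    rw [hqdef, eval_bind₁']
    have h1 : (fun l => MvPolynomial.eval (fun s => w' s i) (g l))
        = fun l => if w l ∈ D then w l i else 0 := by
      funext l
      by_cases h : w l ∈ D
      · simp only [hg, dif_pos h, MvPolynomial.eval_X, if_pos h, hw']
        rw [Equiv.symm_apply_apply]
      · simp only [hg, dif_neg h, if_neg h, map_zero]
    rw [h1]
  have hq : PolyContractive q := by
    intro z hz
    rw [hqdef, eval_bind₁']
    apply hp
    intro l
    by_cases h : w l ∈ D
    · simp only [hg, dif_pos h, MvPolynomial.eval_X]; exact hz _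
    · simp [hg, dif_neg h]
  refine ⟨fun i => MvPolynomial.eval (fun s => w' s i) q,
    ⟨_, w', q, fun s => (e.symm s).2, hq, rfl⟩, ?_⟩
  rw [dist_pi_le_iff (by positivity)]
  intro i
  set f : ℂ → ℂ :=
    fun t => MvPolynomial.eval (fun l => if w l ∈ D then w l i else t * w l i) p with hf
  have hfd : Differentiable ℂ f := by
    refine differentiable_eval p _ fun l => ?_
    by_cases h : w l ∈ D
    · simp only [if_pos h]; exact differentiable_const _
    · simp only [if_neg h]; exact differentiable_id.mul_const _
  have hball : ∀ t : ℂ, t ∈ Metric.ball (0 : ℂ) (1 / ε) → ‖f t‖ ≤ 1 := by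
    intro t ht
    apply hp
    intro l
    by_cases h : w l ∈ D
    · simp only [if_pos h]; exact hD _ h i
    · simp only [if_neg h]
      have hwl : ‖w l i‖ ≤ ε := by
        rcases hw l with h' | h'
        · exact absurd h' h
        · exact h' i
      rw [norm_mul]
      have htn : ‖t‖ ≤ 1 / ε := by
        rw [Metric.mem_ball, dist_zero_right] at ht
        exact le_of_lt ht
      calc ‖t‖ * ‖w l i‖ ≤ (1 / ε) * ε :=
            mul_le_mul htn hwl (norm_nonneg _) (by positivity)
        _ = 1 := by field_simp
  have hmaps : Set.MapsTo f (Metric.ball 0 (1 / ε)) (Metric.ball (f 0) 3) := by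
    intro t ht
    rw [Metric.mem_ball]
    have h1 := hball t ht
    have h0 : ‖f 0‖ ≤ 1 := by
      refine hball 0 ?_
      rw [Metric.mem_ball, dist_self]
      positivity
    rw [dist_eq_norm]
    calc ‖f t - f 0‖ ≤ ‖f t‖ + ‖f 0‖ := norm_sub_le _ _
      _ < 3 := by linarith
  have h1ball : (1 : ℂ) ∈ Metric.ball (0 : ℂ) (1 / ε) := by
    rw [Metric.mem_ball, dist_zero_right, norm_one, lt_div_iff₀ hε, one_mul]
    exact hε1
  have hSchwarz := Complex.dist_le_div_mul_dist_of_mapsTo_ball hfd.differentiableOn (hmaps.mono_right Metric.ball_subset_closedBall) h1ball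
  have hcalc : (3 : ℝ) / (1 / ε) * dist (1 : ℂ) 0 = 3 * ε := by
    rw [dist_zero_right, norm_one, mul_one]
    field_simp
  have hf1 : f 1 = MvPolynomial.eval (fun l => w l i) p := by
    have h1 : (fun l => if w l ∈ D then w l i else (1 : ℂ) * w l i) = fun l => w l i := by
      funext l; by_cases h : w l ∈ D <;> simp [h]
    show MvPolynomial.eval (fun l => if w l ∈ D then w l i else (1 : ℂ) * w l i) p = _
    rw [h1]
  have hf0 : f 0 = MvPolynomial.eval (fun s => w' s i) q := by
    rw [key i]
    have h1 : (fun l => if w l ∈ D then w l i else (0 : ℂ) * w l i)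
        = fun l => if w l ∈ D then w l i else 0 := by
      funext l; by_cases h : w l ∈ D <;> simp [h]
    show MvPolynomial.eval (fun l => if w l ∈ D then w l i else (0 : ℂ) * w l i) p = _
    rw [h1]
  calc dist (MvPolynomial.eval (fun l => w l i) p) (MvPolynomial.eval (fun s => w' s i) q)
      = dist (f 1) (f 0) := by rw [hf1, hf0]
    _ ≤ 3 / (1 / ε) * dist (1 : ℂ) 0 := hSchwarz
    _ = 3 * ε := hcalc

lemma hyperconvex_hcHull {E : Set (Fin k → ℂ)} {ε : ℝ}
    (hE : ∀ v ∈ E, ∀ i : Fin k, ‖v i‖ ≤ 1) (hε : 0 < ε)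
    (hball : ∀ u : Fin k → ℂ, (∀ i, ‖u i‖ ≤ ε) → u ∈ E) :
    Hyperconvex k (hcHull k E) := by
  refine ⟨isClosed_closure, ?_, ?_, ?_, ?_, ?_⟩
  · exact (Metric.isBounded_closedBall (x := (0 : Fin k → ℂ)) (r := 1)).subset
      (hcHull_subset_ball hE)
  · intro x
    apply Absorbs.of_norm
    refine ⟨‖x‖ / ε + 1, fun c hc => ?_⟩
    have hcpos : (0 : ℝ) < ‖c‖ := lt_of_lt_of_le (by positivity) hc
    have hc0 : c ≠ 0 := by simpa using hcpos.ne'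
    rw [Set.singleton_subset_iff, mem_smul_set_iff_inv_smul_mem₀ hc0]
    refine subset_closure (subset_preHull (hball _ fun i => ?_))
    rw [Pi.smul_apply, norm_smul, norm_inv]
    have hxi : ‖x i‖ ≤ ‖x‖ := norm_le_pi_norm x i
    have hdm : ‖x‖ / ε * ε = ‖x‖ := div_mul_cancel₀ _ hε.ne'
    have h3 : ‖x i‖ ≤ ‖c‖ * ε := by
      nlinarith [mul_le_mul_of_nonneg_right hc hε.le]
    calc ‖c‖⁻¹ * ‖x i‖ ≤ ‖c‖⁻¹ * (‖c‖ * ε) :=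
          mul_le_mul_of_nonneg_left h3 (by positivity)
      _ = ε := inv_mul_cancel_left₀ (ne_of_gt hcpos) ε
  · exact balanced_preHull.closure
  · exact convex_preHull.closure
  · exact polyClosed_closure polyClosed_preHull

end Stmt17Aux

open Stmt17Aux in
/-- For any subset `D` of the closed unit polydisk in `ℂ^k`, the hyperconvex hull
`HC(D)` equals `ℋ(D)`, the intersection of all hyperconvex subsets of `ℂ^k`
containing `D`. -/
theorem stmt17 (k : ℕ) (D : Set (Fin k → ℂ))
    (hD : ∀ v ∈ D, ∀ i : Fin k, ‖v i‖ ≤ 1) :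
    hcHull k D = ⋂₀ {H | Hyperconvex k H ∧ D ⊆ H} := by
  apply Set.Subset.antisymm
  · apply Set.subset_sInter
    rintro H ⟨⟨hcl, -, -, -, -, hpoly⟩, hDH⟩
    rw [hcHull_eq]
    refine closure_minimal ?_ hcl
    rintro v ⟨m, w, p, hw, hp, rfl⟩
    exact hpoly m w p (fun l => hDH (hw l)) hp
  · intro v hv
    rw [hcHull_eq, Metric.mem_closure_iff]
    intro δ hδ
    set ε := min (δ / 5) (1 / 2) with hεdef
    have hε : 0 < ε := lt_min (by linarith) (by norm_num)
    have hε1 : ε < 1 := lt_of_le_of_lt (min_le_right _ _) (by norm_num)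
    have hE : ∀ v ∈ D ∪ {u : Fin k → ℂ | ∀ i, ‖u i‖ ≤ ε}, ∀ i : Fin k, ‖v i‖ ≤ 1 := by
      rintro u (hu | hu) i
      · exact hD u hu i
      · exact (hu i).trans hε1.le
    have hhc : Hyperconvex k (hcHull k (D ∪ {u : Fin k → ℂ | ∀ i, ‖u i‖ ≤ ε})) :=
      hyperconvex_hcHull hE hε fun u hu => Or.inr hu
    have hmem : v ∈ hcHull k (D ∪ {u : Fin k → ℂ | ∀ i, ‖u i‖ ≤ ε}) :=
      hv _ ⟨hhc, Set.subset_union_left.trans (subset_preHull.trans subset_closure)⟩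
    rw [hcHull_eq, Metric.mem_closure_iff] at hmem
    obtain ⟨u, hu, hdvu⟩ := hmem ε hε
    obtain ⟨u', hu', hduu'⟩ := approx hD hε hε1 hu
    refine ⟨u', hu', ?_⟩
    have hεδ : ε ≤ δ / 5 := min_le_left _ _
    calc dist v u' ≤ dist v u + dist u u' := dist_triangle _ _ _
      _ < ε + 3 * ε := by linarith
      _ < δ := by linarith
end

section
/- Let a, c > 0 and let P_{a,c} be the 3×3 matrix [[1,1,1],[1,a+1,1],[1,1,c+1]]. For real numbers x, y, set u = (0, x, y). Then the 3×3 matrix with (i,j) entry (1 - uᵢuⱼ)·(P_{a,c})ᵢⱼ is positive semidefinite if and only if (a+1)·x² ≤ a and y²·((ac+a) - (ac+a+c)·x²) ≤ ac - (ac+c)·x². (When (a+1)x² ≤ a the quantity (ac+a) - (ac+a+c)x² is positive, so the second condition is equivalent to y² ≤ (ac-(ac+c)x²)/((ac+a)-(ac+a+c)x²), i.e., (0,x,y) ∈ {P_{a,c}}^⊥.) -/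
/-- Let `a, c > 0`, `P_{a,c} = [[1,1,1],[1,a+1,1],[1,1,c+1]]`, and `u = (0,x,y)` with
`x, y` real.  The matrix with entries `(1 - uᵢuⱼ)·(P_{a,c})ᵢⱼ` is positive semidefinite
if and only if `(a+1)x² ≤ a` and `y²((ac+a) - (ac+a+c)x²) ≤ ac - (ac+c)x²`. -/
theorem stmt18 (a c : ℝ) (ha : 0 < a) (hc : 0 < c) (x y : ℝ) :
    (Matrix.of fun i j => (1 - (![0, x, y] : Fin 3 → ℝ) i * ![0, x, y] j) *
        (!![1, 1, 1; 1, a + 1, 1; 1, 1, c + 1] : Matrix (Fin 3) (Fin 3) ℝ) i j).PosSemidef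
      ↔
    ((a + 1) * x ^ 2 ≤ a ∧
      y ^ 2 * ((a * c + a) - (a * c + a + c) * x ^ 2) ≤ a * c - (a * c + c) * x ^ 2) := by
  set A := a - (a+1)*x^2 with hAdef
  set C := c - (c+1)*y^2 with hCdef
  constructor
  · intro h
    have key : ∀ t u : ℝ, 0 ≤ A*t^2 - 2*(x*y)*t*u + C*u^2 := by
      intro t u
      have := h.dotProduct_mulVec_nonneg ![-(t+u), t, u]
      simp [Matrix.mulVec, dotProduct, Fin.sum_univ_three] at this
      rw [hAdef, hCdef]
      nlinarith [this]
    have hA : 0 ≤ A := by have := key 1 0; nlinarith [this]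
    have hC : 0 ≤ C := by have := key 0 1; nlinarith [this]
    have hD : 0 ≤ A * C - (x*y)^2 := by
      rcases hA.lt_or_eq with hApos | hA0
      · have := key (x*y) A
        nlinarith [this, hApos]
      · -- A = 0, show x*y = 0
        have hxy : x * y = 0 := by
          by_contra hxy
          have h2' : 2*(x*y) ≠ 0 := by
            intro h'; exact hxy (by linarith)
          have ht : 2*(x*y)*((C+1)/(2*(x*y))) = C+1 := mul_div_cancel₀ _ h2'
          have hk := key ((C+1)/(2*(x*y))) 1
          rw [← hA0] at hk
          nlinarith [hk, ht]
        rw [← hA0, hxy]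
        norm_num
    constructor
    · rw [hAdef] at hA; linarith
    · rw [hAdef, hCdef] at hD; nlinarith [hD]
  · rintro ⟨h1, h2⟩
    have hA : 0 ≤ A := by rw [hAdef]; linarith
    have hD : 0 ≤ A * C - (x*y)^2 := by rw [hAdef, hCdef]; nlinarith [h2]
    have key : ∀ t u : ℝ, 0 ≤ A*t^2 - 2*(x*y)*t*u + C*u^2 := by
      intro t u
      rcases hA.lt_or_eq with hApos | hA0
      · nlinarith [sq_nonneg (A*t - x*y*u), mul_nonneg hD (sq_nonneg u), hApos]
      · have hB : x * y = 0 := by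
          have : (x*y)^2 ≤ 0 := by rw [← hA0] at hD; nlinarith [hD]
          nlinarith [sq_nonneg (x*y), this]
        have hx : x ≠ 0 := by
          intro hx0
          rw [hAdef, hx0] at hA0
          norm_num at hA0
          nlinarith [hA0]
        have hy : y = 0 := by
          rcases mul_eq_zero.mp hB with h' | h'
          · exact absurd h' hx
          · exact h'
        rw [← hA0, hB, hCdef, hy]
        norm_num
        positivity
    refine Matrix.posSemidef_iff_dotProduct_mulVec.mpr ⟨?_, ?_⟩
    · ext i j
      fin_cases i <;> fin_cases j <;> simp [Matrix.conjTranspose_apply, Matrix.vecHead, Matrix.vecTail] <;> ring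
    · intro v
      have hk := key (v 1) (v 2)
      have hs := sq_nonneg (v 0 + v 1 + v 2)
      simp [Matrix.mulVec, dotProduct, Fin.sum_univ_three]
      rw [hAdef, hCdef] at hk
      nlinarith [hk, hs]
end
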